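/- The coefficient of X_F in the complete noncommutative symmetric function S^I = S_{i_1}···S_{i_r}, under the embedding S_n = Σ_{|F|=n} X_F into the dual Connes-Kreimer algebra, equals the number of nondecreasing labellings of the forest F by words of evaluation I (i.e., labellings by {1,…,r} that are weakly increasing from leaves to roots, with exactly i_k vertices labelled k). -/

import Mathlib

/-- Plane trees: a node with an ordered (possibly empty) list of subtrees. -/
inductive PlaneTree : Type
  | node : List PlaneTree → PlaneTree

namespace PlaneTree

mutual
  /-- Number of nodes of a plane tree. -/
  def sizeT : PlaneTree → ℕ
    | .node ts => 1 + sizeF ts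
  /-- Number of nodes of a plane forest. -/
  def sizeF : List PlaneTree → ℕ
    | [] => 0
    | t :: ts => sizeT t + sizeF ts
end

/-- `PosT t p` : `p` (a path of child indices) is the position of a node of the tree `t`. -/
inductive PosT : PlaneTree → List ℕ → Prop
  | root (ts : List PlaneTree) : PosT (.node ts) []
  | child {ts : List PlaneTree} {t : PlaneTree} {i : ℕ} {q : List ℕ} :
      ts[i]? = some t → PosT t q → PosT (.node ts) (i :: q)

/-- Positions of the nodes of a forest: a tree index followed by a path in that tree.
A position `q` that strictly extends `p` is a (strict) descendant of `p`; in the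
forest poset (roots maximal) this means `q <_F p`. -/
def PosF (F : List PlaneTree) : List ℕ → Prop
  | [] => False
  | i :: q => ∃ t, F[i]? = some t ∧ PosT t q

mutual
  /-- All admissible cuts (monotone `{1,2}`-labellings) of a tree, as pairs
  (part labelled 1, part labelled 2).  The label-1 part is downward (descendant) closed. -/
  def cutsT : PlaneTree → List (List PlaneTree × List PlaneTree)
    | .node ts => ([.node ts], []) :: (cutsF ts).map (fun p => (p.1, [.node p.2]))
  /-- All admissible cuts of a forest. -/
  def cutsF : List PlaneTree → List (List PlaneTree × List PlaneTree)
    | [] => [([], [])]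
    | t :: ts => (cutsT t).flatMap (fun p => (cutsF ts).map (fun r => (p.1 ++ r.1, p.2 ++ r.2)))
end

open Classical in
/-- The product of the dual noncommutative Connes-Kreimer algebra `H*_NCK`, on
coefficient functions of the basis `X_F`: it is dual to the admissible-cut coproduct. -/
noncomputable def conv (f g : List PlaneTree → ℤ) : List PlaneTree → ℤ :=
  fun F => ((cutsF F).map (fun p => f p.1 * g p.2)).sum

open Classical in
/-- Iterated product, with the unit (coefficients of `1 = X_∅`) as empty product. -/
noncomputable def convList (l : List (List PlaneTree → ℤ)) : List PlaneTree → ℤ :=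
  l.foldr conv (fun F => if F = [] then 1 else 0)

open Classical in
/-- Coefficients of `S_n = Σ_{|F|=n} X_F` in the basis `X_F`. -/
noncomputable def Sfun (n : ℕ) : List PlaneTree → ℤ :=
  fun F => if sizeF F = n then 1 else 0

/-- `NDLab F c ℓ` : `ℓ` is a nondecreasing labelling (from leaves to roots) of the
forest `F` of evaluation the composition `c = (c₁,…,c_r)`: labels lie in `{1,…,r}`,
a descendant's label is ≤ its ancestor's label, and exactly `c_k` nodes get label `k`. -/
def NDLab (F : List PlaneTree) (c : List ℕ) (ℓ : List ℕ → ℕ) : Prop :=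
  (∀ p, ¬ PosF F p → ℓ p = 0) ∧
  (∀ p, PosF F p → 1 ≤ ℓ p ∧ ℓ p ≤ c.length) ∧
  (∀ p q, PosF F p → PosF F q → p <+: q → ℓ q ≤ ℓ p) ∧
  (∀ k : ℕ, Set.ncard {p | PosF F p ∧ ℓ p = k + 1} = c.getD k 0)

/-! ### Auxiliary machinery -/

/-- Increment the head of a list. -/
def incHead : List ℕ → List ℕ
  | [] => []
  | j :: q => (j+1) :: q

@[simp] theorem posF_nil_pos (p : List ℕ) : ¬ PosF [] p := by
  cases p with
  | nil => exact id
  | cons i q => rintro ⟨t, ht, -⟩; simp at ht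

@[simp] theorem posF_empty (F : List PlaneTree) : ¬ PosF F [] := id

theorem posF_cons_iff {F : List PlaneTree} {i : ℕ} {q : List ℕ} :
    PosF F (i :: q) ↔ ∃ t, F[i]? = some t ∧ PosT t q := Iff.rfl

theorem posT_node_iff {ts : List PlaneTree} {p : List ℕ} :
    PosT (.node ts) p ↔ p = [] ∨ PosF ts p := by
  constructor
  · intro h
    cases h with
    | root => exact Or.inl rfl
    | child h1 h2 => exact Or.inr ⟨_, h1, h2⟩
  · rintro (rfl | h)
    · exact .root ts
    · cases p with
      | nil => exact absurd h (posF_empty ts)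
      | cons i q => obtain ⟨t, h1, h2⟩ := h; exact .child h1 h2

theorem posF_cons_split {t : PlaneTree} {ts : List PlaneTree} {p : List ℕ} :
    PosF (t :: ts) p ↔ (∃ q, p = 0 :: q ∧ PosT t q) ∨ (∃ j q, p = (j+1) :: q ∧ PosF ts (j :: q)) := by
  cases p with
  | nil => simp
  | cons i q =>
    cases i with
    | zero =>
      rw [posF_cons_iff]
      simp only [List.getElem?_cons_zero, Option.some.injEq]
      constructor
      · rintro ⟨t', rfl, h⟩; exact Or.inl ⟨q, rfl, h⟩
      · rintro (⟨q', hq, h⟩ | ⟨j, q', hq, h⟩)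
        · obtain ⟨rfl⟩ : q = q' := by injection hq
          exact ⟨t, rfl, h⟩
        · simp at hq
    | succ j =>
      rw [posF_cons_iff]
      simp only [List.getElem?_cons_succ]
      constructor
      · rintro ⟨t', h1, h2⟩; exact Or.inr ⟨j, q, rfl, t', h1, h2⟩
      · rintro (⟨q', hq, h⟩ | ⟨j', q', hq, h⟩)
        · simp at hq
        · obtain ⟨rfl, rfl⟩ : j = j' ∧ q = q' := by constructor <;> injection hq <;> omega
          exact h

mutual
  /-- Cut data for a tree: either the whole tree is in part 1, or the root is in
  part 2 and the children are cut recursively. -/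
  inductive CutT : PlaneTree → Type
    | all (ts : List PlaneTree) : CutT (.node ts)
    | root {ts : List PlaneTree} : CutF ts → CutT (.node ts)
  /-- Cut data for a forest. -/
  inductive CutF : List PlaneTree → Type
    | nil : CutF []
    | cons {t : PlaneTree} {ts : List PlaneTree} : CutT t → CutF ts → CutF (t :: ts)
end

mutual
  def p1T : {t : PlaneTree} → CutT t → List PlaneTree
    | _, .all ts => [.node ts]
    | _, .root e => p1F e
  def p1F : {F : List PlaneTree} → CutF F → List PlaneTree
    | _, .nil => []
    | _, .cons dt ds => p1T dt ++ p1F ds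
end

mutual
  def p2T : {t : PlaneTree} → CutT t → List PlaneTree
    | _, .all _ => []
    | _, .root e => [.node (p2F e)]
  def p2F : {F : List PlaneTree} → CutF F → List PlaneTree
    | _, .nil => []
    | _, .cons dt ds => p2T dt ++ p2F ds
end

mutual
  def allCutT : (t : PlaneTree) → List (CutT t)
    | .node ts => .all ts :: (allCutF ts).map .root
  def allCutF : (F : List PlaneTree) → List (CutF F)
    | [] => [.nil]
    | t :: ts => (allCutT t).flatMap (fun dt => (allCutF ts).map (fun ds => .cons dt ds))
end

mutual
  theorem cutsT_eq : ∀ (t : PlaneTree), cutsT t = (allCutT t).map (fun d => (p1T d, p2T d))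
    | .node ts => by
        rw [cutsT, allCutT, cutsF_eq ts]
        simp [List.map_map, Function.comp_def, p1T, p2T]
  theorem cutsF_eq : ∀ (F : List PlaneTree), cutsF F = (allCutF F).map (fun d => (p1F d, p2F d))
    | [] => by rw [cutsF, allCutF]; simp [p1F, p2F]
    | t :: ts => by
        rw [cutsF, allCutF, cutsT_eq t, cutsF_eq ts]
        simp [List.flatMap_map, List.map_flatMap, List.map_map, Function.comp_def, p1F, p2F]
end

theorem prefix_antisymm {l₁ l₂ : List ℕ} (h1 : l₁ <+: l₂) (h2 : l₂ <+: l₁) : l₁ = l₂ :=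
  List.IsPrefix.eq_of_length h1 (le_antisymm h1.length_le h2.length_le)

theorem sizeF_append (G H : List PlaneTree) : sizeF (G ++ H) = sizeF G + sizeF H := by
  induction G with
  | nil => simp [sizeF]
  | cons t ts ih => rw [List.cons_append, sizeF, sizeF, ih]; omega

mutual
  theorem size_p1_p2_T : ∀ {t : PlaneTree} (d : CutT t), sizeF (p1T d) + sizeF (p2T d) = sizeT t
    | _, .all ts => by simp [p1T, p2T, sizeF, sizeT]
    | _, .root e => by
        have h := size_p1_p2_F e
        simp only [p1T, p2T, sizeF, sizeT]
        omega
  theorem size_p1_p2_F : ∀ {F : List PlaneTree} (d : CutF F), sizeF (p1F d) + sizeF (p2F d) = sizeF F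
    | _, .nil => by simp [p1F, p2F, sizeF]
    | _, .cons dt ds => by
        have h1 := size_p1_p2_T dt
        have h2 := size_p1_p2_F ds
        simp only [p1F, p2F, sizeF_append, sizeF]
        omega
end

mutual
  def sigT : {t : PlaneTree} → CutT t → List ℕ → List ℕ
    | _, .all _, q => q
    | _, .root _, [] => []
    | _, .root e, (k :: q) => sigF e (k :: q)
  def sigF : {F : List PlaneTree} → CutF F → List ℕ → List ℕ
    | _, .nil, q => q
    | _, .cons _ _, [] => []
    | _, .cons (.all _) ds, (j :: q) => incHead (sigF ds (j :: q))
    | _, .cons (.root e) ds, (0 :: q) => 0 :: sigT (.root e) q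
    | _, .cons (.root e) ds, ((j+1) :: q) => incHead (sigF ds (j :: q))
end

mutual
  theorem sigT_pos : ∀ {ts : List PlaneTree} (e : CutF ts) (q : List ℕ),
      PosT (.node (p2F e)) q → PosT (.node ts) (sigT (.root e) q)
    | ts, _, [], _ => by rw [sigT]; exact .root ts
    | _, e, (k :: q), h => by
        rw [sigT, posT_node_iff]
        exact Or.inr (sigF_pos e (k :: q) ((posT_node_iff.mp h).resolve_left (by simp)))
  theorem sigF_pos : ∀ {F : List PlaneTree} (d : CutF F) (q : List ℕ),
      PosF (p2F d) q → PosF F (sigF d q)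
    | _, .nil, _, h => absurd h (posF_nil_pos _)
    | _, .cons _ _, [], h => absurd h (posF_empty _)
    | _, .cons (.all _) ds, (j :: q), h => by
        rw [sigF]
        have h' : PosF (p2F ds) (j :: q) := h
        have := sigF_pos ds (j :: q) h'
        rcases hs : sigF ds (j :: q) with _ | ⟨a, l⟩
        · rw [hs] at this; exact absurd this (posF_empty _)
        · rw [hs] at this
          obtain ⟨t', ht', hp⟩ := this
          exact ⟨t', by simpa using ht', hp⟩
    | _, .cons (.root e) ds, (0 :: q), h => by
        rw [sigF]
        obtain ⟨t', ht', hp⟩ := h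
        simp only [p2F, p2T, List.cons_append, List.getElem?_cons_zero, Option.some.injEq] at ht'
        subst ht'
        exact ⟨_, List.getElem?_cons_zero, sigT_pos e q hp⟩
    | _, .cons (.root e) ds, ((j+1) :: q), h => by
        rw [sigF]
        have h' : PosF (p2F ds) (j :: q) := by
          obtain ⟨t', ht', hp⟩ := h
          exact ⟨t', by simpa [p2F, p2T] using ht', hp⟩
        have := sigF_pos ds (j :: q) h'
        rcases hs : sigF ds (j :: q) with _ | ⟨a, l⟩
        · rw [hs] at this; exact absurd this (posF_empty _)
        · rw [hs] at this
          obtain ⟨t', ht', hp⟩ := this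
          exact ⟨t', by simpa using ht', hp⟩
end

theorem sigF_ne_nil {F : List PlaneTree} (d : CutF F) {q : List ℕ} (h : PosF (p2F d) q) :
    sigF d q ≠ [] := by
  intro e
  have := sigF_pos d q h
  rw [e] at this
  exact posF_empty _ this

theorem incHead_prefix_iff {a b : List ℕ} (ha : a ≠ []) (hb : b ≠ []) :
    incHead a <+: incHead b ↔ a <+: b := by
  rcases a with _ | ⟨x, l⟩; · exact absurd rfl ha
  rcases b with _ | ⟨y, m⟩; · exact absurd rfl hb
  simp only [incHead, List.cons_prefix_cons, Nat.add_right_cancel_iff]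

mutual
  theorem sigT_prefix : ∀ {ts : List PlaneTree} (e : CutF ts) (q q' : List ℕ),
      PosT (.node (p2F e)) q → PosT (.node (p2F e)) q' →
      (sigT (.root e) q <+: sigT (.root e) q' ↔ q <+: q')
    | _, e, [], q', _, _ => by
        rw [sigT]
        simp [List.nil_prefix]
    | _, e, (k :: qq), [], hq, _ => by
        rw [sigT, sigT]
        have hpos : PosF (p2F e) (k :: qq) := (posT_node_iff.mp hq).resolve_left (by simp)
        constructor
        · intro h
          exact absurd (List.prefix_nil.mp h) (sigF_ne_nil e hpos)
        · intro h
          exact absurd (List.prefix_nil.mp h) (by simp)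
    | _, e, (k :: qq), (k' :: qq'), hq, hq' => by
        rw [sigT, sigT]
        exact sigF_prefix e _ _ ((posT_node_iff.mp hq).resolve_left (by simp))
          ((posT_node_iff.mp hq').resolve_left (by simp))
  theorem sigF_prefix : ∀ {F : List PlaneTree} (d : CutF F) (q q' : List ℕ),
      PosF (p2F d) q → PosF (p2F d) q' → (sigF d q <+: sigF d q' ↔ q <+: q')
    | _, .nil, _, _, hq, _ => absurd hq (posF_nil_pos _)
    | _, .cons _ _, [], _, hq, _ => absurd hq (posF_empty _)
    | _, .cons _ _, (_ :: _), [], _, hq' => absurd hq' (posF_empty _)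
    | _, .cons (.all _) ds, (j :: qq), (j' :: qq'), hq, hq' => by
        rw [sigF, sigF]
        have h1 : PosF (p2F ds) (j :: qq) := hq
        have h2 : PosF (p2F ds) (j' :: qq') := hq'
        rw [incHead_prefix_iff (sigF_ne_nil ds h1) (sigF_ne_nil ds h2)]
        exact sigF_prefix ds _ _ h1 h2
    | _, .cons (.root e) ds, (0 :: qq), (0 :: qq'), hq, hq' => by
        rw [sigF, sigF]
        have h1 : PosT (.node (p2F e)) qq := by
          obtain ⟨t', ht', hp⟩ := hq
          simp only [p2F, p2T, List.cons_append, List.getElem?_cons_zero, Option.some.injEq] at ht'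
          rwa [ht']
        have h2 : PosT (.node (p2F e)) qq' := by
          obtain ⟨t', ht', hp⟩ := hq'
          simp only [p2F, p2T, List.cons_append, List.getElem?_cons_zero, Option.some.injEq] at ht'
          rwa [ht']
        simp only [List.cons_prefix_cons, true_and]
        exact sigT_prefix e _ _ h1 h2
    | _, .cons (.root e) ds, (0 :: qq), ((j'+1) :: qq'), hq, hq' => by
        rw [sigF, sigF]
        have h2 : PosF (p2F ds) (j' :: qq') := by
          obtain ⟨t', ht', hp⟩ := hq'
          exact ⟨t', by simpa [p2F, p2T] using ht', hp⟩
        rcases hs : sigF ds (j' :: qq') with _ | ⟨a, l⟩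
        · exact absurd hs (sigF_ne_nil ds h2)
        · simp only [incHead, List.cons_prefix_cons]
          constructor
          · rintro ⟨h, -⟩; omega
          · rintro ⟨h, -⟩; omega
    | _, .cons (.root e) ds, ((j+1) :: qq), (0 :: qq'), hq, hq' => by
        rw [sigF, sigF]
        have h1 : PosF (p2F ds) (j :: qq) := by
          obtain ⟨t', ht', hp⟩ := hq
          exact ⟨t', by simpa [p2F, p2T] using ht', hp⟩
        rcases hs : sigF ds (j :: qq) with _ | ⟨a, l⟩
        · exact absurd hs (sigF_ne_nil ds h1)
        · simp only [incHead, List.cons_prefix_cons]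
          constructor
          · rintro ⟨h, -⟩; omega
          · rintro ⟨h, -⟩; omega
    | _, .cons (.root e) ds, ((j+1) :: qq), ((j'+1) :: qq'), hq, hq' => by
        rw [sigF, sigF]
        have h1 : PosF (p2F ds) (j :: qq) := by
          obtain ⟨t', ht', hp⟩ := hq
          exact ⟨t', by simpa [p2F, p2T] using ht', hp⟩
        have h2 : PosF (p2F ds) (j' :: qq') := by
          obtain ⟨t', ht', hp⟩ := hq'
          exact ⟨t', by simpa [p2F, p2T] using ht', hp⟩
        rw [incHead_prefix_iff (sigF_ne_nil ds h1) (sigF_ne_nil ds h2),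
          sigF_prefix ds _ _ h1 h2]
        simp only [List.cons_prefix_cons, Nat.add_right_cancel_iff]
end

theorem sigF_inj {F : List PlaneTree} (d : CutF F) {q q' : List ℕ}
    (hq : PosF (p2F d) q) (hq' : PosF (p2F d) q') (h : sigF d q = sigF d q') : q = q' :=
  prefix_antisymm ((sigF_prefix d q q' hq hq').mp (h ▸ List.prefix_refl _))
    ((sigF_prefix d q' q hq' hq).mp (h ▸ List.prefix_refl _))

theorem posF_zero_iff {x : PlaneTree} {G : List PlaneTree} {qq : List ℕ} :
    PosF (x :: G) (0 :: qq) ↔ PosT x qq := by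
  rw [posF_cons_iff]
  simp

theorem posF_succ_iff {x : PlaneTree} {G : List PlaneTree} {j : ℕ} {qq : List ℕ} :
    PosF (x :: G) ((j+1) :: qq) ↔ PosF G (j :: qq) := by
  rw [posF_cons_iff, posF_cons_iff]
  simp

/-- The set of positions of `F` kept by the cut `d` (mapped into `F`). -/
def RangeF {F : List PlaneTree} (d : CutF F) : Set (List ℕ) :=
  sigF d '' {q | PosF (p2F d) q}

def treeRangeT : {t : PlaneTree} → CutT t → Set (List ℕ)
  | _, .all _ => ∅
  | _, .root e => insert [] (RangeF e)

theorem range_subset_pos {F : List PlaneTree} (d : CutF F) : RangeF d ⊆ {p | PosF F p} := by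
  rintro p ⟨q, hq, rfl⟩
  exact sigF_pos d q hq

theorem nil_not_mem_range {F : List PlaneTree} (d : CutF F) : [] ∉ RangeF d := by
  rintro ⟨q, hq, h⟩
  exact sigF_ne_nil d hq h

theorem treeRange_subset {t : PlaneTree} (dt : CutT t) : treeRangeT dt ⊆ {p | PosT t p} := by
  cases dt with
  | all ts => simp [treeRangeT]
  | root e =>
    rintro p (rfl | hp)
    · exact .root _
    · exact posT_node_iff.mpr (Or.inr (range_subset_pos e hp))

theorem range_cons {t : PlaneTree} {ts : List PlaneTree} (dt : CutT t) (ds : CutF ts) :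
    RangeF (.cons dt ds) = (fun q => 0 :: q) '' treeRangeT dt ∪ incHead '' RangeF ds := by
  ext p
  simp only [RangeF, Set.mem_union, Set.mem_image, Set.mem_setOf_eq]
  constructor
  · rintro ⟨q, hq, rfl⟩
    rcases q with _ | ⟨j, qq⟩
    · exact absurd hq (posF_empty _)
    cases dt with
    | all ts' =>
      have hq' : PosF (p2F ds) (j :: qq) := hq
      exact Or.inr ⟨sigF ds (j :: qq), ⟨j :: qq, hq', rfl⟩, rfl⟩
    | root e =>
      rcases j with _ | j
      · have hq' : PosT (.node (p2F e)) qq := posF_zero_iff.mp hq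
        rcases qq with _ | ⟨k, qq2⟩
        · exact Or.inl ⟨[], Set.mem_insert _ _, by rw [sigF, sigT]⟩
        · have hp : PosF (p2F e) (k :: qq2) := (posT_node_iff.mp hq').resolve_left (by simp)
          exact Or.inl ⟨sigF e (k :: qq2), Set.mem_insert_of_mem _ ⟨k :: qq2, hp, rfl⟩,
            by rw [sigF, sigT]⟩
      · have hq' : PosF (p2F ds) (j :: qq) := posF_succ_iff.mp hq
        exact Or.inr ⟨sigF ds (j :: qq), ⟨j :: qq, hq', rfl⟩, by rw [sigF]⟩
  · rintro (⟨r, hr, rfl⟩ | ⟨r, ⟨q, hq, rfl⟩, rfl⟩)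
    · cases dt with
      | all ts' => exact absurd hr (Set.notMem_empty _)
      | root e =>
        rcases hr with rfl | ⟨q0, hq0, rfl⟩
        · exact ⟨[0], posF_zero_iff.mpr (.root _), by rw [sigF, sigT]⟩
        · rcases q0 with _ | ⟨k, qq2⟩
          · exact absurd hq0 (posF_empty (p2F e))
          · exact ⟨0 :: k :: qq2,
              posF_zero_iff.mpr (posT_node_iff.mpr (Or.inr hq0)),
              by rw [sigF, sigT]⟩
    · rcases q with _ | ⟨j, qq⟩
      · exact absurd hq (posF_empty _)
      cases dt with
      | all ts' =>
        have hq' : PosF (p2F (.cons (.all ts') ds)) (j :: qq) := hq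
        exact ⟨j :: qq, hq', by rw [sigF]⟩
      | root e =>
        exact ⟨(j+1) :: qq, posF_succ_iff.mpr hq, by rw [sigF]⟩

mutual
  theorem treeRange_closed : ∀ {t : PlaneTree} (dt : CutT t) {p p' : List ℕ},
      p ∈ treeRangeT dt → p' <+: p → PosT t p' → p' ∈ treeRangeT dt
    | _, .all _, p, p', hp, _, _ => absurd hp (Set.notMem_empty _)
    | _, .root e, p, p', hp, hpre, hpos => by
        rcases hp with rfl | hp
        · obtain rfl := List.prefix_nil.mp hpre
          exact Set.mem_insert _ _
        · rcases p' with _ | ⟨k, qq⟩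
          · exact Set.mem_insert _ _
          · exact Set.mem_insert_of_mem _
              (range_closed e hp hpre ((posT_node_iff.mp hpos).resolve_left (by simp)))
  theorem range_closed : ∀ {F : List PlaneTree} (d : CutF F) {p p' : List ℕ},
      p ∈ RangeF d → p' <+: p → PosF F p' → p' ∈ RangeF d
    | _, .nil, p, p', hp, _, hpos => absurd hpos (posF_nil_pos _)
    | _, .cons dt ds, p, p', hp, hpre, hpos => by
        rw [range_cons] at hp ⊢
        rcases hp with ⟨r, hr, rfl⟩ | ⟨r, hr, rfl⟩
        · rcases p' with _ | ⟨j', qq'⟩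
          · exact absurd hpos (posF_empty _)
          obtain ⟨hj, hq⟩ := List.cons_prefix_cons.mp hpre
          subst hj
          exact Or.inl ⟨qq', treeRange_closed dt hr hq (posF_zero_iff.mp hpos), rfl⟩
        · have hrpos := range_subset_pos ds hr
          rcases r with _ | ⟨j, qq⟩
          · exact hrpos.elim
          rcases p' with _ | ⟨j', qq'⟩
          · exact absurd hpos (posF_empty _)
          obtain ⟨hj, hq⟩ := List.cons_prefix_cons.mp hpre
          subst hj
          exact Or.inr ⟨j :: qq',
            range_closed ds hr (List.cons_prefix_cons.mpr ⟨rfl, hq⟩) (posF_succ_iff.mp hpos), rfl⟩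
end

theorem mem_range_cons_zero {t : PlaneTree} {ts : List PlaneTree} (dt : CutT t) (ds : CutF ts)
    (r : List ℕ) : 0 :: r ∈ RangeF (.cons dt ds) ↔ r ∈ treeRangeT dt := by
  rw [range_cons]
  simp only [Set.mem_union, Set.mem_image]
  constructor
  · rintro (⟨s, hs, hse⟩ | ⟨s, hs, hse⟩)
    · obtain rfl : s = r := by injection hse
      exact hs
    · have hspos := range_subset_pos ds hs
      rcases s with _ | ⟨j, q⟩
      · exact hspos.elim
      · exact absurd hse (by simp [incHead])
  · intro hr
    exact Or.inl ⟨r, hr, rfl⟩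

theorem mem_range_cons_succ {t : PlaneTree} {ts : List PlaneTree} (dt : CutT t) (ds : CutF ts)
    (j : ℕ) (q : List ℕ) : (j+1) :: q ∈ RangeF (.cons dt ds) ↔ j :: q ∈ RangeF ds := by
  rw [range_cons]
  simp only [Set.mem_union, Set.mem_image]
  constructor
  · rintro (⟨s, hs, hse⟩ | ⟨s, hs, hse⟩)
    · exact absurd hse (by simp)
    · have hspos := range_subset_pos ds hs
      rcases s with _ | ⟨i, q2⟩
      · exact hspos.elim
      · simp only [incHead, List.cons.injEq] at hse
        obtain ⟨hij, rfl⟩ := hse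
        obtain rfl : i = j := by omega
        exact hs
  · intro hr
    exact Or.inr ⟨j :: q, hr, rfl⟩

mutual
  theorem treeRange_inj : ∀ {t : PlaneTree} (dt dt' : CutT t),
      treeRangeT dt = treeRangeT dt' → dt = dt'
    | _, .all _, .all _, _ => rfl
    | _, .all _, .root e', h => by
        exfalso
        have h0 : ([] : List ℕ) ∈ treeRangeT (CutT.root e') := Set.mem_insert _ _
        rw [← h] at h0
        exact h0
    | _, .root e, .all _, h => by
        exfalso
        have h0 : ([] : List ℕ) ∈ treeRangeT (CutT.root e) := Set.mem_insert _ _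
        rw [h] at h0
        exact h0
    | _, .root e, .root e', h => by
        have : RangeF e = RangeF e' := by
          ext x
          constructor
          · intro hx
            have hne : x ≠ [] := fun hx0 => nil_not_mem_range e (hx0 ▸ hx)
            have : x ∈ treeRangeT (CutT.root e') := by
              rw [← h]; exact Set.mem_insert_of_mem _ hx
            exact this.resolve_left hne
          · intro hx
            have hne : x ≠ [] := fun hx0 => nil_not_mem_range e' (hx0 ▸ hx)
            have : x ∈ treeRangeT (CutT.root e) := by
              rw [h]; exact Set.mem_insert_of_mem _ hx
            exact this.resolve_left hne
        rw [range_inj e e' this]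
  theorem range_inj : ∀ {F : List PlaneTree} (d d' : CutF F), RangeF d = RangeF d' → d = d'
    | _, .nil, .nil, _ => rfl
    | _, .cons dt ds, .cons dt' ds', h => by
        have h1 : treeRangeT dt = treeRangeT dt' := by
          ext r
          rw [← mem_range_cons_zero dt ds r, h, mem_range_cons_zero dt' ds' r]
        have h2 : RangeF ds = RangeF ds' := by
          ext r
          rcases r with _ | ⟨j, q⟩
          · simp [nil_not_mem_range]
          · rw [← mem_range_cons_succ dt ds j q, h, mem_range_cons_succ dt' ds' j q]
        rw [treeRange_inj dt dt' h1, range_inj ds ds' h2]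
end

mutual
  theorem treeCut_exists : ∀ (t : PlaneTree) (S : Set (List ℕ)),
      (∀ p ∈ S, PosT t p) → (∀ p q, p ∈ S → PosT t q → p <+: q → q ∈ S) →
      ∃ dt : CutT t, treeRangeT dt = {p | PosT t p} \ S
    | .node ts, S, hsub, hcl => by
        by_cases hnil : [] ∈ S
        · refine ⟨.all ts, ?_⟩
          have hall : ∀ p, PosT (.node ts) p → p ∈ S :=
            fun p hp => hcl [] p hnil hp List.nil_prefix
          ext p
          simp only [treeRangeT, Set.mem_empty_iff_false, Set.mem_diff, Set.mem_setOf_eq,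
            false_iff, not_and, not_not]
          exact hall p
        · obtain ⟨e, he⟩ := cut_exists ts S
            (fun p hp => (posT_node_iff.mp (hsub p hp)).resolve_left
              (fun h => hnil (h ▸ hp)))
            (fun p q hp hq hpre => hcl p q hp (posT_node_iff.mpr (Or.inr hq)) hpre)
          refine ⟨.root e, ?_⟩
          show insert [] (RangeF e) = _
          rw [he]
          ext p
          simp only [Set.mem_insert_iff, Set.mem_diff, Set.mem_setOf_eq, posT_node_iff]
          constructor
          · rintro (rfl | ⟨hp, hns⟩)
            · exact ⟨Or.inl rfl, hnil⟩
            · exact ⟨Or.inr hp, hns⟩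
          · rintro ⟨(rfl | hp), hns⟩
            · exact Or.inl rfl
            · exact Or.inr ⟨hp, hns⟩
  theorem cut_exists : ∀ (F : List PlaneTree) (S : Set (List ℕ)),
      (∀ p ∈ S, PosF F p) → (∀ p q, p ∈ S → PosF F q → p <+: q → q ∈ S) →
      ∃ d : CutF F, RangeF d = {p | PosF F p} \ S
    | [], S, hsub, _ => by
        refine ⟨.nil, ?_⟩
        ext p
        constructor
        · rintro ⟨q, hq, rfl⟩
          exact absurd hq (posF_nil_pos q)
        · rintro ⟨hp, -⟩
          exact absurd hp (posF_nil_pos p)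
    | t :: ts, S, hsub, hcl => by
        obtain ⟨dt, hdt⟩ := treeCut_exists t {q | 0 :: q ∈ S}
          (fun p hp => posF_zero_iff.mp (hsub _ hp))
          (fun p q hp hq hpre => hcl (0 :: p) (0 :: q) hp (posF_zero_iff.mpr hq)
            (List.cons_prefix_cons.mpr ⟨rfl, hpre⟩))
        obtain ⟨ds, hds⟩ := cut_exists ts {r | incHead r ∈ S}
          (fun p hp => by
            rcases p with _ | ⟨j, q⟩
            · exact absurd (hsub [] hp) (posF_empty _)
            · exact posF_succ_iff.mp (hsub _ hp))
          (fun p q hp hq hpre => by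
            rcases q with _ | ⟨j', q1⟩
            · exact absurd hq (posF_empty ts)
            rcases p with _ | ⟨j, q0⟩
            · exact absurd (hsub _ hp) (posF_empty _)
            obtain ⟨rfl, hq01⟩ := List.cons_prefix_cons.mp hpre
            show incHead ((j : ℕ) :: q1) ∈ S
            exact hcl ((j+1) :: q0) ((j+1) :: q1) hp (posF_succ_iff.mpr hq)
              (List.cons_prefix_cons.mpr ⟨rfl, hq01⟩))
        refine ⟨.cons dt ds, ?_⟩
        rw [range_cons, hdt, hds]
        ext p
        rcases p with _ | ⟨j, q⟩
        · simp only [Set.mem_union, Set.mem_image, Set.mem_diff, Set.mem_setOf_eq]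
          constructor
          · rintro (⟨r, -, h⟩ | ⟨r, ⟨hr, -⟩, h⟩)
            · exact absurd h (by simp)
            · rcases r with _ | ⟨i, q2⟩
              · exact hr.elim
              · exact absurd h (by simp [incHead])
          · rintro ⟨hp, -⟩
            exact absurd hp (posF_empty _)
        · rcases j with _ | j
          · simp only [Set.mem_union, Set.mem_image, Set.mem_diff, Set.mem_setOf_eq]
            constructor
            · rintro (⟨r, ⟨hr1, hr2⟩, h⟩ | ⟨r, ⟨hr, -⟩, h⟩)
              · obtain rfl : r = q := by injection h
                exact ⟨posF_zero_iff.mpr hr1, hr2⟩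
              · rcases r with _ | ⟨i, q2⟩
                · exact hr.elim
                · exact absurd h (by simp [incHead])
            · rintro ⟨hp, hns⟩
              exact Or.inl ⟨q, ⟨posF_zero_iff.mp hp, hns⟩, rfl⟩
          · simp only [Set.mem_union, Set.mem_image, Set.mem_diff, Set.mem_setOf_eq]
            constructor
            · rintro (⟨r, -, h⟩ | ⟨r, ⟨hr1, hr2⟩, h⟩)
              · exact absurd h (by simp)
              · rcases r with _ | ⟨i, q2⟩
                · exact hr1.elim
                · simp only [incHead, List.cons.injEq] at h
                  obtain ⟨hij, rfl⟩ := h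
                  obtain rfl : i = j := by omega
                  exact ⟨posF_succ_iff.mpr hr1, hr2⟩
            · rintro ⟨hp, hns⟩
              exact Or.inr ⟨j :: q, ⟨posF_succ_iff.mp hp, hns⟩, rfl⟩
end

mutual
  theorem mem_allCutT : ∀ {t : PlaneTree} (d : CutT t), d ∈ allCutT t
    | _, .all ts => by rw [allCutT]; exact List.mem_cons_self
    | _, .root e => by
        rw [allCutT]
        exact List.mem_cons_of_mem _ (List.mem_map_of_mem (mem_allCutF e))
  theorem mem_allCutF : ∀ {F : List PlaneTree} (d : CutF F), d ∈ allCutF F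
    | _, .nil => by rw [allCutF]; exact List.mem_singleton_self _
    | _, .cons dt ds => by
        rw [allCutF]
        exact List.mem_flatMap.mpr ⟨dt, mem_allCutT dt, List.mem_map_of_mem (mem_allCutF ds)⟩
end

mutual
  theorem nodup_allCutT : ∀ (t : PlaneTree), (allCutT t).Nodup
    | .node ts => by
        rw [allCutT]
        refine List.nodup_cons.mpr ⟨?_, (nodup_allCutF ts).map ?_⟩
        · simp only [List.mem_map]
          rintro ⟨e, -, h⟩
          cases h
        · intro a b h
          injection h
  theorem nodup_allCutF : ∀ (F : List PlaneTree), (allCutF F).Nodup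
    | [] => by rw [allCutF]; exact List.nodup_singleton _
    | t :: ts => by
        rw [allCutF]
        refine List.nodup_flatMap.mpr ⟨?_, ?_⟩
        · intro dt _
          exact (nodup_allCutF ts).map (fun a b h => by injection h)
        · refine (nodup_allCutT t).imp ?_
          intro a b hab x hxa hxb
          simp only [List.mem_map] at hxa hxb
          obtain ⟨da, -, rfl⟩ := hxa
          obtain ⟨db, -, hba⟩ := hxb
          exact hab (by injection hba.symm)
end

theorem posT_set_eq (ts : List PlaneTree) :
    {p | PosT (.node ts) p} = insert [] {p | PosF ts p} := by
  ext p
  simp [posT_node_iff, Set.mem_insert_iff]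

theorem posF_set_eq (t : PlaneTree) (ts : List PlaneTree) :
    {p | PosF (t :: ts) p} = (fun q => 0 :: q) '' {p | PosT t p} ∪ incHead '' {p | PosF ts p} := by
  ext p
  simp only [Set.mem_union, Set.mem_image, Set.mem_setOf_eq, posF_cons_split]
  constructor
  · rintro (⟨q, rfl, h⟩ | ⟨j, q, rfl, h⟩)
    · exact Or.inl ⟨q, h, rfl⟩
    · exact Or.inr ⟨j :: q, h, rfl⟩
  · rintro (⟨q, h, rfl⟩ | ⟨r, h, rfl⟩)
    · exact Or.inl ⟨q, rfl, h⟩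
    · rcases r with _ | ⟨j, q⟩
      · exact absurd h (posF_empty ts)
      · exact Or.inr ⟨j, q, rfl, h⟩

mutual
  theorem posT_card : ∀ (t : PlaneTree), {p | PosT t p}.Finite ∧ {p | PosT t p}.ncard = sizeT t
    | .node ts => by
        obtain ⟨hf, hc⟩ := posF_card ts
        rw [posT_set_eq]
        refine ⟨hf.insert [], ?_⟩
        rw [Set.ncard_insert_of_notMem (posF_empty ts) hf, hc, sizeT]
        omega
  theorem posF_card : ∀ (F : List PlaneTree),
      {p | PosF F p}.Finite ∧ {p | PosF F p}.ncard = sizeF F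
    | [] => by
        have h : {p | PosF ([] : List PlaneTree) p} = ∅ := by
          ext p; simp only [Set.mem_setOf_eq, Set.mem_empty_iff_false, iff_false]
          exact posF_nil_pos p
        rw [h]
        simp [sizeF]
    | t :: ts => by
        obtain ⟨hft, hct⟩ := posT_card t
        obtain ⟨hfs, hcs⟩ := posF_card ts
        rw [posF_set_eq]
        have hinj0 : Set.InjOn (fun q => 0 :: q) {p | PosT t p} :=
          fun a _ b _ h => by injection h
        have hinjI : Set.InjOn incHead {p | PosF ts p} := by
          intro a ha b hb h
          rcases a with _ | ⟨j, q⟩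
          · exact absurd ha (posF_empty ts)
          rcases b with _ | ⟨j', q'⟩
          · exact absurd hb (posF_empty ts)
          simp only [incHead, List.cons.injEq] at h
          obtain ⟨h1, rfl⟩ := h
          obtain rfl : j = j' := by omega
          rfl
        have hdisj : Disjoint ((fun q => 0 :: q) '' {p | PosT t p})
            (incHead '' {p | PosF ts p}) := by
          rw [Set.disjoint_left]
          rintro p ⟨q, hq, rfl⟩ ⟨r, hr, hre⟩
          rcases r with _ | ⟨j, q'⟩
          · exact absurd hr (posF_empty ts)
          · simp [incHead] at hre
        refine ⟨(hft.image _).union (hfs.image _), ?_⟩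
        rw [Set.ncard_union_eq hdisj (hft.image _) (hfs.image _),
          Set.ncard_image_of_injOn hinj0, Set.ncard_image_of_injOn hinjI, hct, hcs, sizeF]

end

theorem range_finite {F : List PlaneTree} (d : CutF F) : (RangeF d).Finite :=
  ((posF_card (p2F d)).1).image _

theorem range_ncard {F : List PlaneTree} (d : CutF F) : (RangeF d).ncard = sizeF (p2F d) := by
  have h1 : (RangeF d).ncard = {q | PosF (p2F d) q}.ncard :=
    Set.ncard_image_of_injOn (fun a ha b hb h => sigF_inj d ha hb h)
  rw [h1, (posF_card (p2F d)).2]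

theorem compl_range_ncard {F : List PlaneTree} (d : CutF F) :
    ({p | PosF F p} \ RangeF d).ncard = sizeF (p1F d) := by
  rw [Set.ncard_diff (range_subset_pos d) (range_finite d), (posF_card F).2, range_ncard d]
  have := size_p1_p2_F d
  omega

theorem labs_finite (F : List PlaneTree) (c : List ℕ) : {ℓ | NDLab F c ℓ}.Finite := by
  classical
  have hP : {p | PosF F p}.Finite := (posF_card F).1
  set f : (List ℕ → ℕ) → (hP.toFinset → Fin (c.length + 1)) :=
    fun ℓ p => ⟨min (ℓ p) c.length, by omega⟩ with hf
  have hinj : Set.InjOn f {ℓ | NDLab F c ℓ} := by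
    intro a ha b hb h
    funext p
    by_cases hp : PosF F p
    · have hap := ha.2.1 p hp
      have hbp := hb.2.1 p hp
      have hcf := congrFun h ⟨p, by simpa using hp⟩
      simp only [hf, Fin.mk.injEq] at hcf
      omega
    · rw [ha.1 p hp, hb.1 p hp]
  exact Set.Finite.of_finite_image (Set.toFinite _) hinj

theorem mem_rangeF_iff {F : List PlaneTree} {d : CutF F} {p : List ℕ} :
    p ∈ RangeF d ↔ ∃ q, PosF (p2F d) q ∧ sigF d q = p := Iff.rfl

open Classical in
/-- Extend a labelling of `p2F d` to a labelling of `F` by shifting labels up by one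
and labelling the cut-off part by `1`. -/
noncomputable def extLab {F : List PlaneTree} (d : CutF F) (ℓ : List ℕ → ℕ) : List ℕ → ℕ :=
  fun p => if h : ∃ q, PosF (p2F d) q ∧ sigF d q = p then ℓ h.choose + 1
    else if PosF F p then 1 else 0

open Classical in
/-- Restrict a labelling of `F` to `p2F d`, shifting labels down by one. -/
noncomputable def resLab {F : List PlaneTree} (d : CutF F) (ℓ : List ℕ → ℕ) : List ℕ → ℕ :=
  fun q => if PosF (p2F d) q then ℓ (sigF d q) - 1 else 0

theorem extLab_sig {F : List PlaneTree} (d : CutF F) (ℓ : List ℕ → ℕ) {q : List ℕ}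
    (hq : PosF (p2F d) q) : extLab d ℓ (sigF d q) = ℓ q + 1 := by
  have h : ∃ q', PosF (p2F d) q' ∧ sigF d q' = sigF d q := ⟨q, hq, rfl⟩
  rw [extLab, dif_pos h]
  obtain ⟨h1, h2⟩ := h.choose_spec
  rw [sigF_inj d h1 hq h2]

theorem extLab_one {F : List PlaneTree} (d : CutF F) (ℓ : List ℕ → ℕ) {p : List ℕ}
    (hp : PosF F p) (hnr : p ∉ RangeF d) : extLab d ℓ p = 1 := by
  rw [extLab, dif_neg (fun h => hnr (mem_rangeF_iff.mpr h)), if_pos hp]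

theorem extLab_zero {F : List PlaneTree} (d : CutF F) (ℓ : List ℕ → ℕ) {p : List ℕ}
    (hp : ¬ PosF F p) : extLab d ℓ p = 0 := by
  have hnr : ¬ ∃ q, PosF (p2F d) q ∧ sigF d q = p :=
    fun h => hp (range_subset_pos d (mem_rangeF_iff.mpr h))
  rw [extLab, dif_neg hnr, if_neg hp]

theorem extLab_one_iff {F : List PlaneTree} (d : CutF F) {ℓ : List ℕ → ℕ}
    (hb : ∀ q, PosF (p2F d) q → 1 ≤ ℓ q) {p : List ℕ} (hp : PosF F p) :
    extLab d ℓ p = 1 ↔ p ∉ RangeF d := by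
  constructor
  · intro h1 hr
    obtain ⟨q, hq, rfl⟩ := mem_rangeF_iff.mp hr
    rw [extLab_sig d ℓ hq] at h1
    have := hb q hq
    omega
  · intro hnr
    exact extLab_one d ℓ hp hnr

theorem extLab_injOn {F : List PlaneTree} (d : CutF F) (c : List ℕ) :
    Set.InjOn (extLab d) {ℓ | NDLab (p2F d) c ℓ} := by
  intro a ha b hb h
  funext q
  by_cases hq : PosF (p2F d) q
  · have := congrFun h (sigF d q)
    rw [extLab_sig d a hq, extLab_sig d b hq] at this
    omega
  · rw [ha.1 q hq, hb.1 q hq]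

theorem extLab_mem {F : List PlaneTree} (d : CutF F) {c : List ℕ} {ℓ : List ℕ → ℕ}
    (hl : NDLab (p2F d) c ℓ) : NDLab F (sizeF (p1F d) :: c) (extLab d ℓ) := by
  obtain ⟨hsupp, hbnd, hmono, hcnt⟩ := hl
  refine ⟨fun p hp => extLab_zero d ℓ hp, ?_, ?_, ?_⟩
  · intro p hp
    by_cases hr : p ∈ RangeF d
    · obtain ⟨q, hq, rfl⟩ := mem_rangeF_iff.mp hr
      rw [extLab_sig d ℓ hq]
      have := hbnd q hq
      simp only [List.length_cons]
      omega
    · rw [extLab_one d ℓ hp hr]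
      simp only [List.length_cons]
      omega
  · intro p p' hp hp' hpre
    by_cases hr : p ∈ RangeF d
    · obtain ⟨q, hq, rfl⟩ := mem_rangeF_iff.mp hr
      by_cases hr' : p' ∈ RangeF d
      · obtain ⟨q', hq', rfl⟩ := mem_rangeF_iff.mp hr'
        rw [extLab_sig d ℓ hq, extLab_sig d ℓ hq']
        have := hmono q q' hq hq' ((sigF_prefix d q q' hq hq').mp hpre)
        omega
      · rw [extLab_one d ℓ hp' hr', extLab_sig d ℓ hq]
        omega
    · have hr' : p' ∉ RangeF d := fun h => hr (range_closed d h hpre hp)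
      rw [extLab_one d ℓ hp hr, extLab_one d ℓ hp' hr']
  · intro k
    rcases k with _ | k
    · have hset : {p | PosF F p ∧ extLab d ℓ p = 0 + 1} = {p | PosF F p} \ RangeF d := by
        ext p
        simp only [Set.mem_setOf_eq, Set.mem_diff, zero_add]
        constructor
        · rintro ⟨hp, h1⟩
          exact ⟨hp, (extLab_one_iff d (fun q hq => (hbnd q hq).1) hp).mp h1⟩
        · rintro ⟨hp, hnr⟩
          exact ⟨hp, extLab_one d ℓ hp hnr⟩
      rw [hset, compl_range_ncard d]
      simp
    · have hset : {p | PosF F p ∧ extLab d ℓ p = (k + 1) + 1}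
          = sigF d '' {q | PosF (p2F d) q ∧ ℓ q = k + 1} := by
        ext p
        simp only [Set.mem_setOf_eq, Set.mem_image]
        constructor
        · rintro ⟨hp, hv⟩
          by_cases hr : p ∈ RangeF d
          · obtain ⟨q, hq, rfl⟩ := mem_rangeF_iff.mp hr
            rw [extLab_sig d ℓ hq] at hv
            exact ⟨q, ⟨hq, by omega⟩, rfl⟩
          · rw [extLab_one d ℓ hp hr] at hv
            omega
        · rintro ⟨q, ⟨hq, hv⟩, rfl⟩
          refine ⟨sigF_pos d q hq, ?_⟩
          rw [extLab_sig d ℓ hq, hv]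
      rw [hset, Set.ncard_image_of_injOn (fun a ha b hb h => sigF_inj d ha.1 hb.1 h), hcnt k]
      simp

theorem resLab_spec {F : List PlaneTree} (d : CutF F) {c : List ℕ} {i : ℕ} {ℓ : List ℕ → ℕ}
    (hl : NDLab F (i :: c) ℓ) (hS : ∀ p, PosF F p → (ℓ p = 1 ↔ p ∉ RangeF d)) :
    NDLab (p2F d) c (resLab d ℓ) ∧ extLab d (resLab d ℓ) = ℓ := by
  obtain ⟨hsupp, hbnd, hmono, hcnt⟩ := hl
  have hval : ∀ q, PosF (p2F d) q → 2 ≤ ℓ (sigF d q) ∧ ℓ (sigF d q) ≤ c.length + 1 := by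
    intro q hq
    have hpos := sigF_pos d q hq
    have hb := hbnd _ hpos
    have hne : ℓ (sigF d q) ≠ 1 := by
      intro h1
      exact (hS _ hpos).mp h1 ⟨q, hq, rfl⟩
    simp only [List.length_cons] at hb
    omega
  constructor
  · refine ⟨fun q hq => by rw [resLab, if_neg hq], ?_, ?_, ?_⟩
    · intro q hq
      rw [resLab, if_pos hq]
      have := hval q hq
      omega
    · intro q q' hq hq' hpre
      simp only [resLab]
      rw [if_pos hq, if_pos hq']
      have h1 := hmono _ _ (sigF_pos d q hq) (sigF_pos d q' hq')
        ((sigF_prefix d q q' hq hq').mpr hpre)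
      have h2 := hval q hq
      have h3 := hval q' hq'
      omega
    · intro k
      have hset : sigF d '' {q | PosF (p2F d) q ∧ resLab d ℓ q = k + 1}
          = {p | PosF F p ∧ ℓ p = (k + 1) + 1} := by
        ext p
        simp only [Set.mem_setOf_eq, Set.mem_image]
        constructor
        · rintro ⟨q, ⟨hq, hv⟩, rfl⟩
          rw [resLab, if_pos hq] at hv
          have := hval q hq
          exact ⟨sigF_pos d q hq, by omega⟩
        · rintro ⟨hp, hv⟩
          have hr : p ∈ RangeF d := by
            by_contra hnr
            rw [(hS p hp).mpr hnr] at hv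
            omega
          obtain ⟨q, hq, rfl⟩ := mem_rangeF_iff.mp hr
          refine ⟨q, ⟨hq, ?_⟩, rfl⟩
          rw [resLab, if_pos hq]
          omega
      have hinj : Set.InjOn (sigF d) {q | PosF (p2F d) q ∧ resLab d ℓ q = k + 1} :=
        fun a ha b hb h => sigF_inj d ha.1 hb.1 h
      have := Set.ncard_image_of_injOn hinj
      rw [hset] at this
      rw [← this, hcnt (k + 1)]
      simp
  · funext p
    by_cases hp : PosF F p
    · by_cases hr : p ∈ RangeF d
      · obtain ⟨q, hq, rfl⟩ := mem_rangeF_iff.mp hr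
        rw [extLab_sig d _ hq, resLab, if_pos hq]
        have := hval q hq
        omega
      · rw [extLab_one d _ hp hr, (hS p hp).mpr hr]
    · rw [extLab_zero d _ hp, hsupp p hp]

theorem ncard_biUnion_list {α ι : Type*} : ∀ (l : List ι) (B : ι → Set α),
    (∀ i ∈ l, (B i).Finite) → l.Pairwise (fun a b => Disjoint (B a) (B b)) →
    (⋃ i ∈ l, B i).ncard = (l.map fun i => (B i).ncard).sum
  | [], _, _, _ => by simp
  | i :: l, B, hfin, hp => by
      have hrec := ncard_biUnion_list l B
        (fun j hj => hfin j (List.mem_cons_of_mem _ hj)) hp.of_cons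
      have hsplit : (⋃ j ∈ i :: l, B j) = B i ∪ ⋃ j ∈ l, B j := by
        ext x
        constructor
        · intro hx
          rw [Set.mem_iUnion₂] at hx
          obtain ⟨j, hj, hxj⟩ := hx
          rcases List.mem_cons.mp hj with rfl | hj
          · exact Or.inl hxj
          · exact Or.inr (Set.mem_biUnion hj hxj)
        · rintro (hx | hx)
          · exact Set.mem_biUnion (List.mem_cons_self) hx
          · rw [Set.mem_iUnion₂] at hx ⊢
            obtain ⟨j, hj, hxj⟩ := hx
            exact ⟨j, List.mem_cons_of_mem _ hj, hxj⟩
      have hfinU : (⋃ j ∈ l, B j).Finite :=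
        Set.Finite.biUnion l.finite_toSet (fun j hj => hfin j (List.mem_cons_of_mem _ hj))
      have hdisj : Disjoint (B i) (⋃ j ∈ l, B j) := by
        rw [Set.disjoint_left]
        intro x hxi hxU
        rw [Set.mem_iUnion₂] at hxU
        obtain ⟨j, hj, hxj⟩ := hxU
        exact Set.disjoint_left.mp (List.rel_of_pairwise_cons hp hj) hxi hxj
      rw [hsplit, Set.ncard_union_eq hdisj (hfin i (List.mem_cons_self)) hfinU,
        List.map_cons, List.sum_cons, hrec]

theorem int_sum_map {ι : Type*} (l : List ι) (f : ι → ℕ) :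
    ((l.map f).sum : ℤ) = (l.map fun i => (f i : ℤ)).sum := by
  induction l with
  | nil => simp
  | cons a l ih => simp [ih]

open Classical in
theorem key_step (F : List PlaneTree) (i : ℕ) (c : List ℕ) :
    ({ℓ | NDLab F (i :: c) ℓ}.ncard : ℤ)
      = ((allCutF F).map (fun d => (if sizeF (p1F d) = i then (1 : ℤ) else 0)
          * ({ℓ | NDLab (p2F d) c ℓ}.ncard : ℤ))).sum := by
  set B : CutF F → Set (List ℕ → ℕ) :=
    fun d => if sizeF (p1F d) = i then extLab d '' {ℓ | NDLab (p2F d) c ℓ} else ∅ with hB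
  have hcover : {ℓ | NDLab F (i :: c) ℓ} = ⋃ d ∈ allCutF F, B d := by
    ext ℓ
    constructor
    · intro hl
      obtain ⟨d, hd⟩ := cut_exists F {p | PosF F p ∧ ℓ p = 1}
        (fun p hp => hp.1)
        (fun p q hp hq hpre => ⟨hq, by
          have h1 := hl.2.2.1 p q hp.1 hq hpre
          have h2 := hl.2.1 q hq
          have h3 := hp.2
          omega⟩)
      have hS : ∀ p, PosF F p → (ℓ p = 1 ↔ p ∉ RangeF d) := by
        intro p hp
        constructor
        · intro h1 hr
          rw [hd] at hr
          exact hr.2 ⟨hp, h1⟩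
        · intro hnr
          rw [hd] at hnr
          simp only [Set.mem_diff, Set.mem_setOf_eq] at hnr
          push_neg at hnr
          exact (hnr hp).2
      obtain ⟨hmem, hext⟩ := resLab_spec d hl hS
      have hsize : sizeF (p1F d) = i := by
        have h1 : {p | PosF F p} \ RangeF d = {p | PosF F p ∧ ℓ p = 1} := by
          rw [hd]
          ext p
          simp only [Set.mem_diff, Set.mem_setOf_eq]
          tauto
        have h2 := compl_range_ncard d
        rw [h1] at h2
        have h3 := hl.2.2.2 0
        simp only [List.getD_cons_zero, zero_add] at h3
        omega
      rw [Set.mem_iUnion₂]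
      refine ⟨d, mem_allCutF d, ?_⟩
      simp only [hB, hsize, if_pos]
      exact ⟨resLab d ℓ, hmem, hext⟩
    · intro hx
      rw [Set.mem_iUnion₂] at hx
      obtain ⟨d, -, hxd⟩ := hx
      simp only [hB] at hxd
      split_ifs at hxd with hsz
      · obtain ⟨ℓ0, hℓ0, rfl⟩ := hxd
        have h := extLab_mem d hℓ0
        rwa [hsz] at h
      · exact absurd hxd (Set.notMem_empty _)
  have hfin : ∀ d ∈ allCutF F, (B d).Finite := by
    intro d _
    simp only [hB]
    split_ifs
    · exact (labs_finite _ _).image _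
    · exact Set.finite_empty
  have hdisj : ∀ d d' : CutF F, d ≠ d' → Disjoint (B d) (B d') := by
    intro d d' hne
    rw [Set.disjoint_left]
    intro x hxd hxd'
    simp only [hB] at hxd hxd'
    split_ifs at hxd hxd'
    · obtain ⟨ℓ1, h1, rfl⟩ := hxd
      obtain ⟨ℓ2, h2, heq⟩ := hxd'
      apply hne
      apply range_inj
      ext p
      by_cases hp : PosF F p
      · have e1 := extLab_one_iff d (ℓ := ℓ1) (fun q hq => (h1.2.1 q hq).1) hp
        have e2 := extLab_one_iff d' (ℓ := ℓ2) (fun q hq => (h2.2.1 q hq).1) hp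
        rw [heq] at e2
        rw [← not_iff_not]
        exact e1.symm.trans e2
      · constructor
        · intro h
          exact absurd (range_subset_pos d h) hp
        · intro h
          exact absurd (range_subset_pos d' h) hp
    · exact absurd hxd' (Set.notMem_empty _)
    · exact absurd hxd (Set.notMem_empty _)
    · exact absurd hxd (Set.notMem_empty _)
  rw [hcover, ncard_biUnion_list _ _ hfin
    (List.Pairwise.imp (fun hab => hdisj _ _ hab) (nodup_allCutF F)), int_sum_map]
  congr 1
  apply List.map_congr_left
  intro d hd
  simp only [hB]
  by_cases hsz : sizeF (p1F d) = i
  · rw [if_pos hsz, if_pos hsz, Set.ncard_image_of_injOn (extLab_injOn d c), one_mul]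
  · rw [if_neg hsz, if_neg hsz, zero_mul]
    simp

/-- The coefficient of `X_F` in the complete noncommutative symmetric function
`S^I = S_{i₁}⋯S_{i_r}` (under the embedding `S_n = Σ_{|F|=n} X_F` into the dual
Connes-Kreimer algebra, whose product is dual to the admissible-cut coproduct)
equals the number of nondecreasing labellings of the forest `F` of evaluation `I`. -/
theorem coeff_X_in_complete (c : List ℕ) (hc : ∀ x ∈ c, 0 < x) (F : List PlaneTree) :
    convList (c.map Sfun) F = (Set.ncard {ℓ : List ℕ → ℕ | NDLab F c ℓ} : ℤ) := by
  classical
  clear hc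
  induction c generalizing F with
  | nil =>
    have hunit : convList ([].map Sfun) F = if F = [] then 1 else 0 := rfl
    rw [hunit]
    rcases F with _ | ⟨t, ts⟩
    · rw [if_pos rfl]
      have hset : {ℓ : List ℕ → ℕ | NDLab [] [] ℓ} = {fun _ => 0} := by
        ext ℓ
        simp only [Set.mem_setOf_eq, Set.mem_singleton_iff]
        constructor
        · intro h
          funext p
          exact h.1 p (posF_nil_pos p)
        · rintro rfl
          refine ⟨fun p _ => rfl, fun p hp => absurd hp (posF_nil_pos p),
            fun p q hp _ _ => absurd hp (posF_nil_pos p), fun k => ?_⟩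
          have hempty : {p | PosF ([] : List PlaneTree) p ∧ (0 : ℕ) = k + 1} = ∅ := by
            ext p
            simp only [Set.mem_setOf_eq, Set.mem_empty_iff_false, iff_false, not_and]
            intro hp
            exact absurd hp (posF_nil_pos p)
          rw [hempty]
          simp
      rw [hset, Set.ncard_singleton]
      norm_num
    · rw [if_neg (by simp)]
      have hset : {ℓ : List ℕ → ℕ | NDLab (t :: ts) [] ℓ} = ∅ := by
        ext ℓ
        simp only [Set.mem_setOf_eq, Set.mem_empty_iff_false, iff_false]
        intro h
        have hpos : PosF (t :: ts) [0] := by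
          rcases t with ⟨ts'⟩
          exact posF_zero_iff.mpr (.root ts')
        have := h.2.1 [0] hpos
        simp at this
        omega
      rw [hset]
      simp
  | cons i c' ih =>
    have hstep : convList ((i :: c').map Sfun) F
        = conv (Sfun i) (convList (c'.map Sfun)) F := rfl
    rw [hstep, conv, cutsF_eq F, List.map_map, key_step F i c']
    congr 1
    apply List.map_congr_left
    intro d hd
    simp only [Function.comp_apply]
    rw [ih (p2F d)]
    by_cases hsz : sizeF (p1F d) = i
    · simp [Sfun, hsz]
    · simp [Sfun, hsz]
end PlaneTree
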